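/- arXiv:2508.11879 — 5 statements merged into one kernel-verified Lean document; each statement's English description precedes it below -/
import Mathlib

section
/- A permutation π ∈ S_n is 132-pattern avoiding (there is no triple a < b < c with π(a) < π(c) < π(b)) if and only if its Rothe diagram D(π) = {(i,j) : i < π⁻¹(j) and j < π(i)} equals the Young diagram of a partition, i.e., D(π) = {(i,j) : j ≤ λ_i} for some weakly decreasing sequence λ. -/
open Equiv MvPolynomial

/-- A permutation of ℕ has finite support. -/
def FinSupp (w : Equiv.Perm ℕ) : Prop := {i | w i ≠ i}.Finite

/-- Inversion set Inv(w) = {(i,j) : i < j, w i > w j}. -/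
def invSet (w : Equiv.Perm ℕ) : Set (ℕ × ℕ) := {p | p.1 < p.2 ∧ w p.2 < w p.1}

/-- Co-inversion set coInv(w) = {(i,j) : i < j, w i < w j}. -/
def coinvSet (w : Equiv.Perm ℕ) : Set (ℕ × ℕ) := {p | p.1 < p.2 ∧ w p.1 < w p.2}

/-- Coxeter length ℓ(w) = |Inv(w)|. -/
noncomputable def len (w : Equiv.Perm ℕ) : ℕ := (invSet w).ncard

/-- Cover relation of left weak order: u = s_k * w with ℓ(u) = ℓ(w) + 1. -/
def WeakCover (w u : Equiv.Perm ℕ) : Prop :=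
  ∃ k, u = Equiv.swap k (k + 1) * w ∧ len u = len w + 1

/-- Left weak order: reflexive-transitive closure of weak covers. -/
def leL (w u : Equiv.Perm ℕ) : Prop := Relation.ReflTransGen WeakCover w u

/-- π avoids the pattern 132 (π is dominant). -/
def Avoids132 (π : Equiv.Perm ℕ) : Prop :=
  ¬ ∃ a b c : ℕ, a < b ∧ b < c ∧ π a < π c ∧ π c < π b

/-- Rothe diagram D(π) (0-indexed conventions). -/
def Rothe (π : Equiv.Perm ℕ) : Set (ℕ × ℕ) := {p | p.1 < π⁻¹ p.2 ∧ p.2 < π p.1}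

/-- Young diagram of a partition (0-indexed): row i has l i cells. -/
def yd (l : ℕ → ℕ) : Set (ℕ × ℕ) := {p | p.2 < l p.1}

/-- Conjugate partition (0-indexed): column j has |{i : l i > j}| cells. -/
noncomputable def conjPart (l : ℕ → ℕ) (j : ℕ) : ℕ := {i | j < l i}.ncard

/-- A pipe dream: a finite set of crossing tiles together with the (uniquely
determined) labels of the pipes on the four edges of each tile.  At a cross
tile the pipes pass straight through; at a bump tile the pipe from the north
exits west and the pipe from the east exits south.  Pipe j enters the quadrant
at the north edge of column j. -/
structure PipeDream where
  cross : Finset (ℕ × ℕ)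
  north : ℕ × ℕ → ℕ
  east : ℕ × ℕ → ℕ
  south : ℕ × ℕ → ℕ
  west : ℕ × ℕ → ℕ
  north_top : ∀ j, north (0, j) = j
  north_succ : ∀ i j, north (i + 1, j) = south (i, j)
  east_eq : ∀ i j, east (i, j) = west (i, j + 1)
  south_cross : ∀ p ∈ cross, south p = north p
  west_cross : ∀ p ∈ cross, west p = east p
  south_bump : ∀ p, p ∉ cross → south p = east p
  west_bump : ∀ p, p ∉ cross → west p = north p

namespace PipeDream

/-- Pipes a and b cross at position p. -/
def CrossAt (P : PipeDream) (a b : ℕ) (p : ℕ × ℕ) : Prop :=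
  p ∈ P.cross ∧ ({P.north p, P.east p} : Set ℕ) = {a, b}

/-- A pipe dream is reduced if no two pipes cross more than once. -/
def Reduced (P : PipeDream) : Prop :=
  ∀ a b p q, P.CrossAt a b p → P.CrossAt a b q → p = q

/-- P is a pipe dream for the permutation w: pipe a exits on the west edge at
row w⁻¹(a), i.e. the one-line notation read along the west edge is w. -/
def IsFor (P : PipeDream) (w : Equiv.Perm ℕ) : Prop := ∀ i, P.west (i, 0) = w i

/-- Pipe k passes through the tile p. -/
def OnPipe (P : PipeDream) (k : ℕ) (p : ℕ × ℕ) : Prop := P.north p = k ∨ P.east p = k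

/-- p lies weakly northwest of pipe k. -/
def NWOfPipe (P : PipeDream) (k : ℕ) (p : ℕ × ℕ) : Prop :=
  ∃ q, P.OnPipe k q ∧ p.1 ≤ q.1 ∧ p.2 ≤ q.2

end PipeDream

/-- The set of reduced pipe dreams for w. -/
def PD (w : Equiv.Perm ℕ) : Set PipeDream := {P | P.Reduced ∧ P.IsFor w}

/-- The set of π-dominated positions of a pipe dream P ∈ PD(w), where π is the
dominant permutation with Rothe diagram the Young diagram of l:
row(p) < λ'(π(w⁻¹(s_p))) (0-indexed), s_p being the pipe exiting p south. -/
noncomputable def dominated (π : Equiv.Perm ℕ) (l : ℕ → ℕ) (w : Equiv.Perm ℕ)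
    (P : PipeDream) : Set (ℕ × ℕ) :=
  {p | p.1 < conjPart l (π (w⁻¹ (P.south p)))}

/-- The Schubert polynomial as the pipe dream generating function. -/
noncomputable def Schub (w : Equiv.Perm ℕ) : MvPolynomial ℕ ℤ :=
  ∑ᶠ P ∈ PD w, ∏ p ∈ P.cross, X p.1

/-- The polynomial ring ℤ[x;y]: x-variables are `Sum.inl i`, y-variables `Sum.inr i`. -/
abbrev PolyXY := MvPolynomial (ℕ ⊕ ℕ) ℤ

/-- The field of rational functions in the x- and y-variables. -/
noncomputable abbrev RatXY := FractionRing PolyXY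

noncomputable def Xv (i : ℕ) : RatXY := algebraMap PolyXY RatXY (X (Sum.inl i))
noncomputable def Yv (i : ℕ) : RatXY := algebraMap PolyXY RatXY (X (Sum.inr i))

/-- The π-padded Schubert polynomial 𝔖_w^π(x;y) = y^λ · 𝔖_w(x₁/y₁, x₂/y₂, …),
viewed in the field of rational functions. -/
noncomputable def padded (l : ℕ → ℕ) (w : Equiv.Perm ℕ) : RatXY :=
  (∏ᶠ i, Yv i ^ l i) * (aeval (fun i => Xv i / Yv i) (Schub w))

/-- Δ = Σ_i x_i ∂/∂y_i. -/
noncomputable def deltaOp (f : PolyXY) : PolyXY :=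
  ∑ᶠ i : ℕ, X (Sum.inl i) * pderiv (Sum.inr i) f

/-- ∇ = Σ_i y_i ∂/∂x_i. -/
noncomputable def nablaOp (f : PolyXY) : PolyXY :=
  ∑ᶠ i : ℕ, X (Sum.inr i) * pderiv (Sum.inl i) f

/-!
If π avoids 132, the Rothe diagram is a lower set of ℕ × ℕ: moving a cell of D(π) up or left can
only leave D(π) by producing a 132 pattern. Conversely, a 132 pattern at a < b < c puts the cell
(b, π c) in D(π) but not the cell (a, π c) above it. A lower set of ℕ × ℕ with bounded rows is the
Young diagram of its row lengths, and these vanish from the first row whose column 0 is empty.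
-/

open Function

section LowerSet

variable {s : Set (ℕ × ℕ)}

noncomputable def rowLength (s : Set (ℕ × ℕ)) (i : ℕ) : ℕ := sInf {j | (i, j) ∉ s}

lemma IsLowerSet.mem_iff_lt_rowLength (hs : IsLowerSet s) {i : ℕ} (hrow : ∃ j, (i, j) ∉ s)
    (j : ℕ) : (i, j) ∈ s ↔ j < rowLength s i := by
  refine ⟨fun hj => lt_of_not_ge fun hle => ?_, fun hj => not_not.1 (Nat.notMem_of_lt_sInf hj)⟩
  exact Nat.sInf_mem hrow (hs (Prod.mk_le_mk.2 ⟨le_rfl, hle⟩) hj)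

lemma IsLowerSet.eq_yd_rowLength (hs : IsLowerSet s) (hrow : ∀ i, ∃ j, (i, j) ∉ s) :
    s = yd (rowLength s) := by
  ext ⟨i, j⟩
  exact hs.mem_iff_lt_rowLength (hrow i) j

lemma IsLowerSet.antitone_rowLength (hs : IsLowerSet s) (hrow : ∀ i, ∃ j, (i, j) ∉ s) :
    Antitone (rowLength s) := by
  intro i i' hii'
  refine le_of_forall_lt fun j hj => ?_
  rw [← hs.mem_iff_lt_rowLength (hrow i')] at hj
  rw [← hs.mem_iff_lt_rowLength (hrow i)]
  exact hs (Prod.mk_le_mk.2 ⟨hii', le_rfl⟩) hj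

lemma IsLowerSet.support_rowLength_subset (hs : IsLowerSet s) (hrow : ∀ i, ∃ j, (i, j) ∉ s)
    {i₀ : ℕ} (hi₀ : (i₀, 0) ∉ s) : support (rowLength s) ⊆ Set.Iio i₀ := by
  intro i hi
  rw [mem_support, ← Nat.pos_iff_ne_zero, ← hs.mem_iff_lt_rowLength (hrow i)] at hi
  exact lt_of_not_ge fun hle => hi₀ (hs (Prod.mk_le_mk.2 ⟨hle, le_rfl⟩) hi)

end LowerSet

lemma isLowerSet_yd {l : ℕ → ℕ} (hl : Antitone l) : IsLowerSet (yd l) :=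
  fun _ _ hle hp => lt_of_le_of_lt hle.2 (lt_of_lt_of_le hp (hl hle.1))

section Rothe

variable {π : Perm ℕ} {i i' j j' : ℕ}

lemma Avoids132.mem_rothe_of_le_fst (h : Avoids132 π) (hij : (i, j) ∈ Rothe π) (hi : i' ≤ i) :
    (i', j) ∈ Rothe π := by
  obtain hi | rfl := hi.lt_or_eq
  · obtain ⟨hrow, hcol⟩ := hij
    refine ⟨hi.trans hrow, lt_of_not_ge fun hle => ?_⟩
    have hne : π i' ≠ j := by
      rintro rfl
      rw [Perm.coe_inv, symm_apply_apply] at hrow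
      exact (hi.trans hrow).false
    exact h ⟨i', i, π⁻¹ j, hi, hrow, by simpa using hle.lt_of_ne hne, by simpa using hcol⟩
  · exact hij

lemma Avoids132.mem_rothe_of_le_snd (h : Avoids132 π) (hij : (i, j) ∈ Rothe π) (hj : j' ≤ j) :
    (i, j') ∈ Rothe π := by
  obtain hj | rfl := hj.lt_or_eq
  · obtain ⟨hrow, hcol⟩ := hij
    refine ⟨lt_of_not_ge fun hle => ?_, hj.trans hcol⟩
    have hne : π⁻¹ j' ≠ i := by
      rintro rfl
      rw [Perm.coe_inv, apply_symm_apply] at hcol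
      exact (hj.trans hcol).false
    exact h ⟨π⁻¹ j', i, π⁻¹ j, hle.lt_of_ne hne, hrow, by simpa using hj, by simpa using hcol⟩
  · exact hij

lemma avoids132_iff_isLowerSet_rothe : Avoids132 π ↔ IsLowerSet (Rothe π) := by
  refine ⟨fun h ⟨i, j⟩ ⟨i', j'⟩ hle hij => ?_, fun hs ⟨a, b, c, hab, hbc, hac, hcb⟩ => ?_⟩
  · exact h.mem_rothe_of_le_snd (h.mem_rothe_of_le_fst hij hle.1) hle.2
  · have hb : (b, π c) ∈ Rothe π := ⟨by simpa using hbc, hcb⟩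
    exact (hs (Prod.mk_le_mk.2 ⟨hab.le, le_rfl⟩) hb).2.not_gt hac

lemma notMem_rothe_apply (i : ℕ) : (i, π i) ∉ Rothe π := fun h => h.2.false

lemma notMem_rothe_inv_apply (j : ℕ) : (π⁻¹ j, j) ∉ Rothe π := fun h => h.1.false

end Rothe

theorem stmt2_general (π : Equiv.Perm ℕ) :
    Avoids132 π ↔ ∃ l : ℕ → ℕ, Antitone l ∧ (Function.support l).Finite ∧
      Rothe π = yd l := by
  rw [avoids132_iff_isLowerSet_rothe]
  constructor
  · intro hs
    have hrow : ∀ i, ∃ j, (i, j) ∉ Rothe π := fun i => ⟨π i, notMem_rothe_apply i⟩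
    exact ⟨rowLength (Rothe π), hs.antitone_rowLength hrow,
      (Set.finite_Iio _).subset (hs.support_rowLength_subset hrow (notMem_rothe_inv_apply 0)),
      hs.eq_yd_rowLength hrow⟩
  · rintro ⟨l, hl, -, hrothe⟩
    exact hrothe ▸ isLowerSet_yd hl

/-- π is 132-avoiding iff its Rothe diagram is the Young diagram
of a partition. -/
theorem stmt2 (π : Equiv.Perm ℕ) (hπ : FinSupp π) :
    Avoids132 π ↔ ∃ l : ℕ → ℕ, Antitone l ∧ (Function.support l).Finite ∧
      Rothe π = yd l :=
  stmt2_general π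
end

section
/- Let π be a dominant permutation, and suppose w ≤_L π in left weak order and w ⋖ t_{ab}·w is a Bruhat cover (a < b, ℓ(t_{ab}w) = ℓ(w)+1). Then t_{ab}·w ≤_L π if and only if (w⁻¹(a), w⁻¹(b)) ∈ Inv(π). -/
open Equiv MvPolynomial

/-!
Below a permutation `π` with finitely many inversions, left weak order is containment of
inversion sets: a weak cover adds one inversion, and when `Inv w ⊊ Inv π` a descent `k` of
`π * w⁻¹` gives an adjacent pair of values to add. Write `t_{ab} w = w * t_{ij}` with
`i = w⁻¹ a`, `j = w⁻¹ b`. Comparing inversion sets through an explicit injection shows that the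
Bruhat cover condition forces `i < j` and no value between `a` and `b` at a position between `i`
and `j` (otherwise the length drops, or grows by at least three). Then every inversion of
`w * t_{ij}` is an inversion of `w`, the pair `(i, j)`, or follows from these by transitivity
of the order `π` reverses, so `Inv (w * t_{ij}) ⊆ Inv π` exactly when `(i, j) ∈ Inv π`.
-/

lemma invSet_finite_of_finSupp {π : Perm ℕ} (hπ : FinSupp π) : (invSet π).Finite := by
  obtain ⟨N, hN⟩ := hπ.bddAbove
  have hfix : ∀ m, N < m → π m = m := fun m hm => by
    by_contra h
    exact absurd (hN h) (by omega)
  refine ((Set.finite_Iic N).prod (Set.finite_Iic N)).subset ?_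
  rintro ⟨x, y⟩ ⟨hxy, hπxy⟩
  dsimp only at hxy hπxy
  have hy : y ≤ N := by
    by_contra! hNy
    rw [hfix y hNy] at hπxy
    -- `π x > y > N` is fixed by `π`, hence so is `x`, and then `x < y < π x = x`
    rw [π.injective (hfix (π x) (by omega))] at hπxy
    omega
  exact ⟨Set.mem_Iic.mpr (by omega), Set.mem_Iic.mpr hy⟩

section WeakOrder

variable {w π : Perm ℕ}

lemma invSet_swap_mul_of_lt {k : ℕ} (h : w⁻¹ k < w⁻¹ (k + 1)) :
    invSet (swap k (k + 1) * w) = insert (w⁻¹ k, w⁻¹ (k + 1)) (invSet w) := by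
  ext ⟨x, y⟩
  have := @Perm.eq_inv_iff_eq _ w
  simp only [invSet, Set.mem_insert_iff, Set.mem_ofPred_eq, Perm.mul_apply, swap_apply_def,
    Prod.mk.injEq]
  split_ifs <;> grind

lemma invSet_swap_mul_of_gt {k : ℕ} (h : w⁻¹ (k + 1) < w⁻¹ k) :
    invSet (swap k (k + 1) * w) = invSet w \ {(w⁻¹ (k + 1), w⁻¹ k)} := by
  ext ⟨x, y⟩
  have := @Perm.eq_inv_iff_eq _ w
  simp only [invSet, Set.mem_sdiff, Set.mem_singleton_iff, Set.mem_ofPred_eq, Perm.mul_apply,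
    swap_apply_def, Prod.mk.injEq]
  split_ifs <;> grind

lemma WeakCover.invSet_subset {u : Perm ℕ} (h : WeakCover w u) (hu : (invSet u).Finite) :
    invSet w ⊆ invSet u := by
  obtain ⟨k, rfl, hlen⟩ := h
  rcases lt_trichotomy (w⁻¹ k) (w⁻¹ (k + 1)) with hlt | heq | hgt
  · rw [invSet_swap_mul_of_lt hlt]
    exact Set.subset_insert _ _
  · simpa using w⁻¹.injective heq
  · have hmem : (w⁻¹ (k + 1), w⁻¹ k) ∈ invSet w :=
      ⟨hgt, by simp only [Perm.coe_inv, apply_symm_apply]; omega⟩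
    have hw : invSet w = insert (w⁻¹ (k + 1), w⁻¹ k) (invSet (swap k (k + 1) * w)) := by
      rw [invSet_swap_mul_of_gt hgt, Set.insert_sdiff_singleton, Set.insert_eq_of_mem hmem]
    have hnot : (w⁻¹ (k + 1), w⁻¹ k) ∉ invSet (swap k (k + 1) * w) := by
      simp [invSet_swap_mul_of_gt hgt]
    unfold len at hlen
    rw [hw, Set.ncard_insert_of_notMem hnot hu] at hlen
    omega

lemma leL.invSet_subset (hπ : (invSet π).Finite) (h : leL w π) : invSet w ⊆ invSet π := by
  induction h using Relation.ReflTransGen.head_induction_on with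
  | refl => exact subset_rfl
  | head hcov _ ih => exact (hcov.invSet_subset (hπ.subset ih)).trans ih

lemma Equiv.Perm.eq_one_of_forall_apply_le_apply_succ {u : Perm ℕ} (h : ∀ k, u k ≤ u (k + 1)) :
    u = 1 := by
  have hu : StrictMono u := strictMono_nat_of_lt_succ fun k =>
    (h k).lt_of_ne fun he => by simpa using u.injective he
  ext n
  exact congrArg (· n) (Subsingleton.elim (hu.orderIsoOfSurjective u u.surjective) (.refl ℕ))

lemma exists_lt_and_mem_invSet_of_ne (hsub : invSet w ⊆ invSet π) (hne : w ≠ π) :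
    ∃ k, w⁻¹ k < w⁻¹ (k + 1) ∧ (w⁻¹ k, w⁻¹ (k + 1)) ∈ invSet π := by
  obtain ⟨k, hk⟩ : ∃ k, (π * w⁻¹) (k + 1) < (π * w⁻¹) k := by
    by_contra! h
    exact hne (mul_inv_eq_one.mp (Perm.eq_one_of_forall_apply_le_apply_succ h)).symm
  have hlt : w⁻¹ k < w⁻¹ (k + 1) := by
    rcases lt_trichotomy (w⁻¹ k) (w⁻¹ (k + 1)) with hlt | heq | hgt
    · exact hlt
    · simpa using w⁻¹.injective heq
    · have hinv : (w⁻¹ (k + 1), w⁻¹ k) ∈ invSet w :=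
        ⟨hgt, by simp only [Perm.coe_inv, apply_symm_apply]; omega⟩
      exact absurd (hsub hinv).2 (not_lt.mpr hk.le)
  exact ⟨k, hlt, hlt, hk⟩

lemma leL_of_invSet_subset (hπ : (invSet π).Finite) (hsub : invSet w ⊆ invSet π) : leL w π := by
  induction hn : (invSet π \ invSet w).ncard using Nat.strong_induction_on generalizing w with
  | _ n ih =>
    by_cases hne : w = π
    · exact hne ▸ .refl
    obtain ⟨k, hlt, hmem⟩ := exists_lt_and_mem_invSet_of_ne hsub hne
    have hnot : (w⁻¹ k, w⁻¹ (k + 1)) ∉ invSet w := fun h => by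
      simp only [invSet, Set.mem_ofPred_eq, Perm.coe_inv, apply_symm_apply] at h
      omega
    have hcov : WeakCover w (swap k (k + 1) * w) := by
      refine ⟨k, rfl, ?_⟩
      unfold len
      rw [invSet_swap_mul_of_lt hlt, Set.ncard_insert_of_notMem hnot (hπ.subset hsub)]
    have hsub' : invSet (swap k (k + 1) * w) ⊆ invSet π := by
      rw [invSet_swap_mul_of_lt hlt]
      exact Set.insert_subset hmem hsub
    have hdec : (invSet π \ invSet (swap k (k + 1) * w)).ncard < n := by
      rw [← hn, invSet_swap_mul_of_lt hlt]
      refine Set.ncard_lt_ncard ?_ hπ.sdiff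
      exact (Set.sdiff_subset_sdiff_right (Set.subset_insert _ _)).ssubset_of_mem_notMem
        ⟨hmem, hnot⟩ fun h => h.2 (Set.mem_insert _ _)
    exact .head hcov (ih _ hdec hsub' rfl)

lemma leL_iff_invSet_subset (hπ : (invSet π).Finite) : leL w π ↔ invSet w ⊆ invSet π :=
  ⟨leL.invSet_subset hπ, leL_of_invSet_subset hπ⟩

end WeakOrder

-- Relabelling by `swap c d` turns inversions of `v * swap c d` into inversions of `v`, except on
-- pairs whose order it reverses; those are kept as they are, which makes the map an involution.
def swapPair (c d : ℕ) (p : ℕ × ℕ) : ℕ × ℕ :=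
  if swap c d p.1 < swap c d p.2 then (swap c d p.1, swap c d p.2) else p

section SwapPair

variable {v : Perm ℕ} {c d : ℕ}

lemma swapPair_swapPair {p : ℕ × ℕ} (hp : p.1 < p.2) : swapPair c d (swapPair c d p) = p := by
  by_cases h : swap c d p.1 < swap c d p.2
  · simp [swapPair, h, hp]
  · simp [swapPair, h]

lemma swapPair_injOn_invSet (c d : ℕ) (v : Perm ℕ) : Set.InjOn (swapPair c d) (invSet v) :=
  fun p hp q hq h => by
    rw [← swapPair_swapPair (c := c) (d := d) hp.1, h, swapPair_swapPair hq.1]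

lemma swapPair_mem_invSet_and_ne (hcd : c < d) (hv : v d < v c) {p : ℕ × ℕ}
    (hp : p ∈ invSet (v * swap c d)) :
    swapPair c d p ∈ invSet v ∧ swapPair c d p ≠ (c, d) ∧
      ∀ z, c < z → z < d → v d < v z → v z < v c →
        swapPair c d p ≠ (c, z) ∧ swapPair c d p ≠ (z, d) := by
  obtain ⟨x, y⟩ := p
  obtain ⟨hxy, hvxy⟩ := hp
  simp only [swapPair, invSet, Set.mem_ofPred_eq, Perm.mul_apply, swap_apply_def] at hxy hvxy ⊢
  split_ifs at hvxy ⊢ <;> grind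

lemma len_mul_swap_add_ncard_le {T : Set (ℕ × ℕ)} (hfin : (invSet v).Finite) (hT : T ⊆ invSet v)
    (hmaps : ∀ p ∈ invSet (v * swap c d), swapPair c d p ∈ invSet v \ T) :
    len (v * swap c d) + T.ncard ≤ len v := by
  have hle := Set.ncard_le_ncard_of_injOn _ hmaps (swapPair_injOn_invSet c d _) hfin.sdiff
  rw [Set.ncard_sdiff hT (hfin.subset hT)] at hle
  have := Set.ncard_le_ncard hT hfin
  unfold len
  omega

lemma len_mul_swap_lt (hfin : (invSet v).Finite) (hcd : c < d) (hv : v d < v c) :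
    len (v * swap c d) < len v := by
  have := len_mul_swap_add_ncard_le (T := {(c, d)}) hfin
    (Set.singleton_subset_iff.mpr ⟨hcd, hv⟩) fun p hp => by
      obtain ⟨hmem, hne, -⟩ := swapPair_mem_invSet_and_ne hcd hv hp
      exact ⟨hmem, hne⟩
  rw [Set.ncard_singleton] at this
  omega

lemma len_mul_swap_add_three_le {z : ℕ} (hfin : (invSet v).Finite) (hcz : c < z) (hzd : z < d)
    (hdz : v d < v z) (hzc : v z < v c) : len (v * swap c d) + 3 ≤ len v := by
  have hcd : c < d := hcz.trans hzd
  have hv : v d < v c := hdz.trans hzc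
  have hT : ({(c, d), (c, z), (z, d)} : Set (ℕ × ℕ)) ⊆ invSet v := by
    simp only [Set.insert_subset_iff, Set.singleton_subset_iff]
    exact ⟨⟨hcd, hv⟩, ⟨hcz, hzc⟩, ⟨hzd, hdz⟩⟩
  have hcard : ({(c, d), (c, z), (z, d)} : Set (ℕ × ℕ)).ncard = 3 :=
    Set.ncard_eq_three.mpr ⟨_, _, _, by grind, by grind, by grind, rfl⟩
  have := len_mul_swap_add_ncard_le hfin hT fun p hp => by
    obtain ⟨hmem, hne, hmid⟩ := swapPair_mem_invSet_and_ne hcd hv hp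
    obtain ⟨hne_left, hne_right⟩ := hmid z hcz hzd hdz hzc
    exact ⟨hmem, by simp only [Set.mem_insert_iff, Set.mem_singleton_iff]; tauto⟩
  omega

end SwapPair

section BruhatCover

variable {w : Perm ℕ} {i j : ℕ}

lemma lt_and_not_between_of_len_mul_swap_eq (hfin : (invSet w).Finite) (hw : w i < w j)
    (hlen : len (w * swap i j) = len w + 1) :
    i < j ∧ ∀ z, i < z → z < j → ¬ (w i < w z ∧ w z < w j) := by
  have hij : i < j := by
    by_contra! hji
    have hne : j ≠ i := by rintro rfl; exact lt_irrefl _ hw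
    have := len_mul_swap_lt hfin (hji.lt_of_ne hne) hw
    rw [swap_comm] at this
    omega
  refine ⟨hij, fun z hiz hzj ⟨hlo, hhi⟩ => ?_⟩
  have hfin' : (invSet (w * swap i j)).Finite :=
    Set.finite_of_ncard_ne_zero (by unfold len at hlen; omega)
  have hz : swap i j z = z := swap_apply_of_ne_of_ne hiz.ne' hzj.ne
  have := len_mul_swap_add_three_le hfin' hiz hzj
    (by simpa [Perm.mul_apply, hz] using hlo) (by simpa [Perm.mul_apply, hz] using hhi)
  rw [mul_swap_mul_self] at this
  omega

lemma invSet_mul_swap_subset {π : Perm ℕ} (hij : i < j) (hw : w i < w j)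
    (hgap : ∀ z, i < z → z < j → ¬ (w i < w z ∧ w z < w j))
    (hsub : invSet w ⊆ invSet π) (hπ : (i, j) ∈ invSet π) : invSet (w * swap i j) ⊆ invSet π := by
  have H : ∀ x y, x < y → w y < w x → π y < π x := fun x y hxy hwxy =>
    (hsub (show (x, y) ∈ invSet w from ⟨hxy, hwxy⟩)).2
  have Hπ : π j < π i := hπ.2
  have hout : ∀ z, i < z → z < j → w z < w i ∨ w j < w z := fun z hiz hzj => by
    have := hgap z hiz hzj
    have := w.injective.ne hiz.ne'
    have := w.injective.ne hzj.ne
    omega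
  have hfix : ∀ z, z ≠ i → z ≠ j → swap i j z = z := fun _ => swap_apply_of_ne_of_ne
  rintro ⟨x, y⟩ ⟨hxy, hwxy⟩
  refine ⟨hxy, ?_⟩
  dsimp only at hxy hwxy ⊢
  simp only [Perm.mul_apply] at hwxy
  rcases eq_or_ne x i with rfl | hxi
  · rcases eq_or_ne y j with rfl | hyj
    · exact Hπ
    rw [swap_apply_left, hfix y hxy.ne' hyj] at hwxy
    rcases hyj.lt_or_gt with hyj | hjy
    · exact H x y hxy (by have := hout y hxy hyj; omega)
    · exact (H j y hjy hwxy).trans Hπ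
  rcases eq_or_ne x j with rfl | hxj
  · rw [swap_apply_right, hfix y (by omega) (by omega)] at hwxy
    exact H x y hxy (by omega)
  rcases eq_or_ne y i with rfl | hyi
  · rw [swap_apply_left, hfix x hxi hxj] at hwxy
    exact H x y hxy (by omega)
  rcases eq_or_ne y j with rfl | hyj
  · rw [swap_apply_right, hfix x hxi hxj] at hwxy
    rcases hxi.lt_or_gt with hxi | hix
    · exact Hπ.trans (H x i hxi hwxy)
    · exact H x y hxy (by have := hout x hix hxy; omega)
  rw [hfix x hxi hxj, hfix y hyi hyj] at hwxy
  exact H x y hxy hwxy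

end BruhatCover

theorem stmt4_general (π w : Equiv.Perm ℕ) (a b : ℕ) (hπ : FinSupp π)
    (hw : leL w π) (hab : a < b)
    (hcov : len (Equiv.swap a b * w) = len w + 1) :
    leL (Equiv.swap a b * w) π ↔ (w⁻¹ a, w⁻¹ b) ∈ invSet π := by
  have hπfin := invSet_finite_of_finSupp hπ
  rw [leL_iff_invSet_subset hπfin] at hw ⊢
  rw [swap_mul_eq_mul_swap] at hcov ⊢
  have hwab : w (w⁻¹ a) < w (w⁻¹ b) := by simpa using hab
  obtain ⟨hlt, hgap⟩ := lt_and_not_between_of_len_mul_swap_eq (hπfin.subset hw) hwab hcov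
  refine ⟨fun h => h ⟨hlt, ?_⟩, invSet_mul_swap_subset hlt hwab hgap hw⟩
  simpa [Perm.mul_apply] using hab

/-- cover lemma for dominant π: for w ≤_L π and a Bruhat cover
w ⋖ t_{ab}w, one has t_{ab}w ≤_L π iff (w⁻¹(a), w⁻¹(b)) ∈ Inv(π). -/
theorem stmt4 (π w : Equiv.Perm ℕ) (a b : ℕ) (hπ : FinSupp π)
    (hdom : Avoids132 π) (hw : leL w π) (hab : a < b)
    (hcov : len (Equiv.swap a b * w) = len w + 1) :
    leL (Equiv.swap a b * w) π ↔ (w⁻¹ a, w⁻¹ b) ∈ invSet π :=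
  stmt4_general π w a b hπ hw hab hcov
end

section
/- For any permutations π and w ⋖ t_{ab}w a Bruhat cover with t_{ab}w ≤_L π, one has (w⁻¹(a), w⁻¹(b)) ∈ Inv(π). -/
open Equiv MvPolynomial

section Aux

private lemma mem_invSet {v : Equiv.Perm ℕ} {x y : ℕ} :
    (x, y) ∈ invSet v ↔ x < y ∧ v y < v x := Iff.rfl

private lemma perm_eq_inv (v : Equiv.Perm ℕ) {z c : ℕ} (h : v z = c) : z = v⁻¹ c := by
  rw [← h]; exact (Equiv.symm_apply_apply v z).symm

private lemma status_eq (a b : ℕ) (hab : a < b) (v : Equiv.Perm ℕ) (x y : ℕ)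
    (h : ¬(a ≤ v x ∧ v x ≤ b) ∨ ¬(a ≤ v y ∧ v y ≤ b)) :
    ((Equiv.swap a b * v) y < (Equiv.swap a b * v) x ↔ v y < v x) := by
  simp only [Equiv.Perm.mul_apply, Equiv.swap_apply_def]
  split_ifs <;> omega

private lemma inv_finite_of (a b : ℕ) (hab : a < b) (v : Equiv.Perm ℕ)
    (hfin : (invSet (Equiv.swap a b * v)).Finite) : (invSet v).Finite := by
  have hB : ({z | a ≤ v z ∧ v z ≤ b} : Set ℕ).Finite := by
    have he : ({z | a ≤ v z ∧ v z ≤ b} : Set ℕ) = v ⁻¹' (Set.Icc a b) := rfl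
    rw [he]
    exact (Set.finite_Icc a b).preimage v.injective.injOn
  apply Set.Finite.subset (hfin.union (hB.prod hB))
  rintro ⟨x, y⟩ hp
  rw [mem_invSet] at hp
  obtain ⟨hxy, hvy⟩ := hp
  by_cases hc : (a ≤ v x ∧ v x ≤ b) ∧ (a ≤ v y ∧ v y ≤ b)
  · exact Or.inr ⟨hc.1, hc.2⟩
  · exact Or.inl (mem_invSet.2 ⟨hxy, (status_eq a b hab v x y (by tauto)).2 hvy⟩)

private lemma len_succ_le (a b : ℕ) (hab : a < b) (v : Equiv.Perm ℕ)
    (hij : v⁻¹ a < v⁻¹ b)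
    (hfin : (invSet (Equiv.swap a b * v)).Finite) :
    len v + 1 ≤ len (Equiv.swap a b * v) := by
  classical
  set u := Equiv.swap a b * v with hu
  set i := v⁻¹ a with hi
  set j := v⁻¹ b with hj
  have hvi : v i = a := Equiv.apply_symm_apply v a
  have hvj : v j = b := Equiv.apply_symm_apply v b
  have huz : ∀ z, u z = if v z = a then b else if v z = b then a else v z := by
    intro z; rw [hu, Equiv.Perm.mul_apply, Equiv.swap_apply_def]
  have hui : u i = b := by rw [huz, hvi]; simp
  have huj : u j = a := by rw [huz, hvj, if_neg (by omega), if_pos rfl]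
  have hij_mem : (i, j) ∈ invSet u := mem_invSet.2 ⟨hij, by rw [hui, huj]; exact hab⟩
  set f : ℕ × ℕ → ℕ × ℕ := fun p =>
    if v p.2 = a ∧ a < v p.1 ∧ v p.1 < b then (p.1, j)
    else if v p.1 = b ∧ a < v p.2 ∧ v p.2 < b then (i, p.2)
    else p with hf
  have hfx : ∀ x y : ℕ, f (x, y) =
      if v y = a ∧ a < v x ∧ v x < b then (x, j)
      else if v x = b ∧ a < v y ∧ v y < b then (i, y)
      else (x, y) := fun x y => rfl
  have hmaps : Set.MapsTo f (invSet v) (invSet u \ {(i, j)}) := by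
    rintro ⟨x, y⟩ hp
    rw [mem_invSet] at hp
    obtain ⟨hxy, hvv⟩ := hp
    rw [Set.mem_diff, hfx]
    split_ifs with c1 c2
    · -- f p = (x, j)
      obtain ⟨hya, hax, hxb⟩ := c1
      have hyi : y = i := perm_eq_inv v hya
      have hux : u x = v x := by rw [huz, if_neg (by omega), if_neg (by omega)]
      refine ⟨mem_invSet.2 ⟨by omega, by rw [huj, hux]; exact hax⟩, ?_⟩
      simp only [Set.mem_singleton_iff, Prod.mk.injEq, not_and]
      intro hxi; omega
    · -- f p = (i, y)
      obtain ⟨hxb, hay, hyb⟩ := c2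
      have hxj : x = j := perm_eq_inv v hxb
      have huy : u y = v y := by rw [huz, if_neg (by omega), if_neg (by omega)]
      refine ⟨mem_invSet.2 ⟨by omega, by rw [hui, huy]; exact hyb⟩, ?_⟩
      simp only [Set.mem_singleton_iff, Prod.mk.injEq, not_and]
      intro _ hyj
      rw [hyj, hvj] at hyb; omega
    · -- f p = p
      have hne : ¬(v x = b ∧ v y = a) := by
        rintro ⟨h1, h2⟩
        have hx' := perm_eq_inv v h1
        have hy' := perm_eq_inv v h2
        omega
      refine ⟨mem_invSet.2 ⟨hxy, ?_⟩, ?_⟩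
      · rw [huz, huz]
        split_ifs <;> omega
      · simp only [Set.mem_singleton_iff, Prod.mk.injEq, not_and]
        intro hxi hyj
        rw [hxi, hvi] at hvv
        rw [hyj, hvj] at hvv
        omega
  have hinj : Set.InjOn f (invSet v) := by
    rintro ⟨x, y⟩ hp ⟨x', y'⟩ hp' heq
    rw [mem_invSet] at hp hp'
    obtain ⟨hxy, hvv⟩ := hp
    obtain ⟨hxy', hvv'⟩ := hp'
    rw [hfx, hfx] at heq
    have hija : i ≠ j := by omega
    split_ifs at heq with c1 d1 d2 c2 d1 d2 d1 d2 <;>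
        simp only [Prod.mk.injEq] at heq ⊢
    · -- case1 / case1
      exact ⟨heq.1, v.injective (c1.1.trans d1.1.symm)⟩
    · -- case1 / case2
      exfalso
      rw [heq.1, hvi] at c1
      omega
    · -- case1 / case3 : heq : x = x' ∧ j = y'
      exfalso
      rw [← heq.2, ← heq.1, hvj] at hvv'
      omega
    · -- case2 / case1
      exfalso
      have hyb : v y = b := by rw [heq.2]; exact hvj
      omega
    · -- case2 / case2
      exact ⟨v.injective (c2.1.trans d2.1.symm), heq.2⟩
    · -- case2 / case3 : heq : i = x' ∧ y = y'
      exfalso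
      rw [← heq.1, hvi, ← heq.2] at hvv'
      omega
    · -- case3 / case1 : heq : x = x' ∧ y = j
      exfalso
      rw [heq.2, hvj, heq.1] at hvv
      omega
    · -- case3 / case2 : heq : x = i ∧ y = y'
      exfalso
      rw [heq.1, hvi, heq.2] at hvv
      omega
    · exact heq
  have hle : (invSet v).ncard ≤ (invSet u \ {(i, j)}).ncard :=
    Set.ncard_le_ncard_of_injOn f hmaps hinj (hfin.diff)
  have hone : (invSet u \ {(i, j)}).ncard + 1 = (invSet u).ncard :=
    Set.ncard_diff_singleton_add_one hij_mem hfin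
  show (invSet v).ncard + 1 ≤ (invSet u).ncard
  omega

private lemma weakCover_inv_subset {w u : Equiv.Perm ℕ} (h : WeakCover w u) :
    invSet w ⊆ invSet u := by
  obtain ⟨k, rfl, hlen⟩ := h
  set u := Equiv.swap k (k + 1) * w with hu
  have hufin : (invSet u).Finite := by
    by_contra hinf
    have h0 : len u = 0 := Set.Infinite.ncard hinf
    omega
  by_contra hns
  rw [Set.not_subset] at hns
  obtain ⟨⟨x, y⟩, hpw, hpu⟩ := hns
  rw [mem_invSet] at hpw
  obtain ⟨hxy, hvv⟩ := hpw
  have hich : (k ≤ w x ∧ w x ≤ k + 1) ∧ (k ≤ w y ∧ w y ≤ k + 1) := by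
    by_contra hc
    exact hpu (mem_invSet.2 ⟨hxy, (status_eq k (k + 1) (by omega) w x y (by tauto)).2 hvv⟩)
  have hwx : w x = k + 1 := by omega
  have hwy : w y = k := by omega
  have hxk : x = w⁻¹ (k + 1) := perm_eq_inv w hwx
  have hyk : y = w⁻¹ k := perm_eq_inv w hwy
  have hsub : invSet u ⊆ invSet w := by
    rintro ⟨x', y'⟩ hq
    rw [mem_invSet] at hq
    obtain ⟨hxy', huu'⟩ := hq
    rw [mem_invSet]
    refine ⟨hxy', ?_⟩
    by_cases hc : (k ≤ w x' ∧ w x' ≤ k + 1) ∧ (k ≤ w y' ∧ w y' ≤ k + 1)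
    · by_cases hx1 : w x' = k + 1
      · have hy1 : w y' = k := by
          rcases Nat.lt_or_ge (w y') (k + 1) with h1 | h1
          · omega
          · exfalso
            have he : w y' = w x' := by omega
            have := w.injective he
            omega
        omega
      · have hx0 : w x' = k := by omega
        have hy1 : w y' = k + 1 := by
          rcases Nat.eq_or_lt_of_le hc.2.1 with h1 | h1
          · exfalso
            have he : w y' = w x' := by omega
            have := w.injective he
            omega
          · omega
        exfalso
        have hx'y : x' = w⁻¹ k := perm_eq_inv w hx0
        have hy'x : y' = w⁻¹ (k + 1) := perm_eq_inv w hy1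
        omega
    · exact (status_eq k (k + 1) (by omega) w x' y' (by tauto)).1 huu'
  have hwfin : (invSet w).Finite := by
    apply Set.Finite.subset (hufin.union (Set.finite_singleton (x, y)))
    rintro ⟨x', y'⟩ hq
    rw [mem_invSet] at hq
    obtain ⟨hxy', hvv'⟩ := hq
    by_cases hmem : (x', y') ∈ invSet u
    · exact Or.inl hmem
    · right
      have hich' : (k ≤ w x' ∧ w x' ≤ k + 1) ∧ (k ≤ w y' ∧ w y' ≤ k + 1) := by
        by_contra hc
        exact hmem (mem_invSet.2
          ⟨hxy', (status_eq k (k + 1) (by omega) w x' y' (by tauto)).2 hvv'⟩)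
      have hwx' : w x' = k + 1 := by omega
      have hwy' : w y' = k := by omega
      have h1 : x' = w⁻¹ (k + 1) := perm_eq_inv w hwx'
      have h2 : y' = w⁻¹ k := perm_eq_inv w hwy'
      simp only [Set.mem_singleton_iff, Prod.mk.injEq]
      omega
  have hle : len u ≤ len w := Set.ncard_le_ncard hsub hwfin
  omega

private lemma leL_inv_subset {w u : Equiv.Perm ℕ} (h : leL w u) :
    invSet w ⊆ invSet u := by
  induction h with
  | refl => exact subset_rfl
  | tail _ hcov ih => exact ih.trans (weakCover_inv_subset hcov)

end Aux

/-- forward direction without dominance: if w ⋖ t_{ab}w is a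
Bruhat cover and t_{ab}w ≤_L π, then (w⁻¹(a), w⁻¹(b)) ∈ Inv(π). -/
theorem stmt5 (π w : Equiv.Perm ℕ) (a b : ℕ) (hab : a < b)
    (hcov : len (Equiv.swap a b * w) = len w + 1)
    (h : leL (Equiv.swap a b * w) π) :
    (w⁻¹ a, w⁻¹ b) ∈ invSet π := by
  set i := w⁻¹ a with hi
  set j := w⁻¹ b with hj
  have hwi : w i = a := Equiv.apply_symm_apply w a
  have hwj : w j = b := Equiv.apply_symm_apply w b
  have hijne : i ≠ j := by
    intro he
    rw [he, hwj] at hwi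
    omega
  have hufin : (invSet (Equiv.swap a b * w)).Finite := by
    by_contra hinf
    have h0 : len (Equiv.swap a b * w) = 0 := Set.Infinite.ncard hinf
    omega
  have hij : i < j := by
    by_contra hle
    have hji : j < i := by omega
    have hwfin : (invSet w).Finite := inv_finite_of a b hab w hufin
    have hinva : (Equiv.swap a b * w)⁻¹ a = j := by
      rw [mul_inv_rev, Equiv.Perm.mul_apply, Equiv.swap_inv, Equiv.swap_apply_left]
    have hinvb : (Equiv.swap a b * w)⁻¹ b = i := by
      rw [mul_inv_rev, Equiv.Perm.mul_apply, Equiv.swap_inv, Equiv.swap_apply_right]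
    have hsq : Equiv.swap a b * (Equiv.swap a b * w) = w := by
      rw [← mul_assoc, Equiv.swap_mul_self, one_mul]
    have key := len_succ_le a b hab (Equiv.swap a b * w)
      (by rw [hinva, hinvb]; exact hji) (by rw [hsq]; exact hwfin)
    rw [hsq, hcov] at key
    omega
  have hmem : (i, j) ∈ invSet (Equiv.swap a b * w) := by
    rw [mem_invSet]
    refine ⟨hij, ?_⟩
    rw [Equiv.Perm.mul_apply, Equiv.Perm.mul_apply, hwi, hwj,
      Equiv.swap_apply_left, Equiv.swap_apply_right]
    exact hab
  exact leL_inv_subset h hmem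
end

section
/- Let π be dominant with Rothe diagram equal to the Young diagram of λ, and let w be any permutation with w ≤_L π. For indices i, k ≥ 1, the following are equivalent: (1) i ≤ λ'_{π(w⁻¹(k))}, where λ' is the conjugate of λ; (2) π(w⁻¹(k)) ≤ λ_i; (3) (i, π(w⁻¹(k))) ∈ D(π); (4) (i, w⁻¹(k)) ∈ Inv(π). -/
open Equiv MvPolynomial

/-! The column `{i | j < λ_i}` of the Young diagram is a lower set because `λ` is antitone, and it
is finite because it is also a column of the Rothe diagram, bounded by `π⁻¹ j`; so it is the initial
segment of length `λ'_j`. The other two equivalences unfold the definitions of `D(π)` and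
`Inv(π)`. -/

theorem lt_conjPart_iff {l : ℕ → ℕ} (hl : Antitone l) {j : ℕ} (hfin : {i | j < l i}.Finite)
    (i : ℕ) : i < conjPart l j ↔ j < l i := by
  have hlower : IsLowerSet {i | j < l i} := fun _ _ hba ha => ha.trans_le (hl hba)
  obtain huniv | ⟨n, hn⟩ := hlower.eq_univ_or_Iio
  · exact absurd (huniv ▸ hfin) Set.infinite_univ
  · rw [conjPart, hn, Set.ncard_Iio_nat, ← Set.mem_Iio, ← hn, Set.mem_ofPred_eq]

theorem finite_setOf_lt_of_rothe_eq_yd {π : Perm ℕ} {l : ℕ → ℕ} (hD : Rothe π = yd l) (j : ℕ) :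
    {i | j < l i}.Finite :=
  (Set.finite_Iio (π⁻¹ j)).subset fun i hi => (show (i, j) ∈ Rothe π from hD ▸ hi).1

theorem mem_rothe_iff_mem_invSet (π : Perm ℕ) (i m : ℕ) :
    (i, π m) ∈ Rothe π ↔ (i, m) ∈ invSet π := by
  simp only [Rothe, invSet, Set.mem_ofPred_eq, Perm.inv_def, symm_apply_apply]

theorem stmt6_general (π w : Equiv.Perm ℕ) (l : ℕ → ℕ)
    (hl : Antitone l) (hD : Rothe π = yd l)
    (i k : ℕ) :
    (i < conjPart l (π (w⁻¹ k)) ↔ π (w⁻¹ k) < l i)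
      ∧ (π (w⁻¹ k) < l i ↔ (i, π (w⁻¹ k)) ∈ Rothe π)
      ∧ ((i, π (w⁻¹ k)) ∈ Rothe π ↔ (i, w⁻¹ k) ∈ invSet π) :=
  ⟨lt_conjPart_iff hl (finite_setOf_lt_of_rothe_eq_yd hD _) i,
    by rw [hD]; rfl,
    mem_rothe_iff_mem_invSet π i (w⁻¹ k)⟩

/-- for dominant π with diagram the Young diagram of λ and any
w ≤_L π, the four conditions (0-indexed) are equivalent:
i < λ'(π(w⁻¹ k)) ↔ π(w⁻¹ k) < λ_i ↔ (i, π(w⁻¹ k)) ∈ D(π) ↔ (i, w⁻¹ k) ∈ Inv(π). -/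
theorem stmt6 (π w : Equiv.Perm ℕ) (l : ℕ → ℕ) (hπ : FinSupp π)
    (hdom : Avoids132 π) (hl : Antitone l) (hD : Rothe π = yd l)
    (hw : leL w π) (i k : ℕ) :
    (i < conjPart l (π (w⁻¹ k)) ↔ π (w⁻¹ k) < l i)
      ∧ (π (w⁻¹ k) < l i ↔ (i, π (w⁻¹ k)) ∈ Rothe π)
      ∧ ((i, π (w⁻¹ k)) ∈ Rothe π ↔ (i, w⁻¹ k) ∈ invSet π) :=
  stmt6_general π w l hl hD i k
end

section
/- If π is dominant with diagram D(π) equal to the Young diagram of partition λ, then π has a unique reduced pipe dream, whose set of crossing tiles is exactly D(π), and consequently the Schubert polynomial of π is the single monomial x^λ = ∏_i x_i^{λ_i}. -/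
open Equiv MvPolynomial

/-!
Read a pipe dream row by row: the pipes met by the cut above row `i` are those exiting in rows
`≥ i`, and row `i` either passes the pipe in column `j` straight down (a crossing tile) or takes
it from the next bump to the east. In a reduced pipe dream for `w`, two pipes on that cut cross
below it iff their order along the cut is opposite to their order of exit, by induction on the
rows. For dominant `π` with `D(π) = λ`, induction on `i` shows that the cut above row `i`
carries the same labels as for the pipe dream with crossing set `λ`. Then `π i` sits in column
`λ i`, so the first bump of row `i` is there; a crossing further east would be between pipes
`b < a` both larger than `π i`, which by 132-avoidance exit in the order `b`, `a` and hence do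
not cross. Finally a pipe dream is determined by its crossing tiles, and `λ` itself gives a
reduced pipe dream for `π`.
-/

def skipAt (m j : ℕ) : ℕ := if j < m then j else j + 1

lemma skipAt_strictMono (m : ℕ) : StrictMono (skipAt m) := by
  intro a b h
  unfold skipAt
  split_ifs <;> omega

lemma range_comp_skipAt {f : ℕ → ℕ} (hf : Function.Injective f) (m : ℕ) :
    Set.range (f ∘ skipAt m) = Set.range f \ {f m} := by
  ext k
  simp only [Set.mem_range, Function.comp, Set.mem_sdiff, Set.mem_singleton_iff]
  constructor
  · rintro ⟨j, rfl⟩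
    refine ⟨⟨_, rfl⟩, fun h => ?_⟩
    have := hf h
    unfold skipAt at this
    split_ifs at this <;> omega
  · rintro ⟨⟨j, rfl⟩, hne⟩
    rcases Nat.lt_or_gt_of_ne (fun h : j = m => hne (h ▸ rfl)) with h | h
    · exact ⟨j, by rw [skipAt, if_pos h]⟩
    · exact ⟨j - 1, by rw [skipAt, if_neg (by omega), Nat.sub_add_cancel (by omega)]⟩

namespace PipeDream

section Rows

variable (P : PipeDream)

lemma exists_notMem_cross (i j : ℕ) : ∃ k, j ≤ k ∧ (i, k) ∉ P.cross := by
  refine ⟨max j (P.cross.sup Prod.snd + 1), le_max_left _ _, fun hmem => ?_⟩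
  have := Finset.le_sup (f := Prod.snd) hmem
  simp only [sup_le_iff] at this
  omega

noncomputable def nextBump (i j : ℕ) : ℕ := Nat.find (P.exists_notMem_cross i j)

lemma le_nextBump (i j : ℕ) : j ≤ P.nextBump i j :=
  (Nat.find_spec (P.exists_notMem_cross i j)).1

lemma nextBump_notMem (i j : ℕ) : (i, P.nextBump i j) ∉ P.cross :=
  (Nat.find_spec (P.exists_notMem_cross i j)).2

lemma mem_cross_of_lt_nextBump {i j k : ℕ} (hjk : j ≤ k) (hk : k < P.nextBump i j) :
    (i, k) ∈ P.cross :=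
  not_not.1 fun hnot => Nat.find_min (P.exists_notMem_cross i j) hk ⟨hjk, hnot⟩

lemma nextBump_le {i j k : ℕ} (hjk : j ≤ k) (hk : (i, k) ∉ P.cross) : P.nextBump i j ≤ k :=
  Nat.find_le ⟨hjk, hk⟩

lemma nextBump_eq_self {i j : ℕ} (h : (i, j) ∉ P.cross) : P.nextBump i j = j :=
  le_antisymm (P.nextBump_le le_rfl h) (P.le_nextBump i j)

lemma nextBump_eq_of_le_of_le {i j k : ℕ} (hjk : j ≤ k) (hk : k ≤ P.nextBump i j) :
    P.nextBump i k = P.nextBump i j :=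
  le_antisymm (P.nextBump_le hk (P.nextBump_notMem i j))
    (P.nextBump_le (hjk.trans (P.le_nextBump i k)) (P.nextBump_notMem i k))

lemma west_eq_north_nextBump (i j : ℕ) : P.west (i, j) = P.north (i, P.nextBump i j) := by
  generalize hd : P.nextBump i j - j = d
  induction d generalizing j with
  | zero =>
    have hj : P.nextBump i j = j := le_antisymm (by omega) (P.le_nextBump i j)
    rw [P.west_bump _ (hj ▸ P.nextBump_notMem i j), hj]
  | succ d ih =>
    have hj : j < P.nextBump i j := by omega
    rw [P.west_cross _ (P.mem_cross_of_lt_nextBump le_rfl hj), P.east_eq,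
      ih (j + 1) (by rw [P.nextBump_eq_of_le_of_le (by omega) hj]; omega),
      P.nextBump_eq_of_le_of_le (by omega) hj]

lemma east_eq_north_nextBump (i j : ℕ) : P.east (i, j) = P.north (i, P.nextBump i (j + 1)) := by
  rw [P.east_eq, P.west_eq_north_nextBump]

/-- The column at the cut above row `i` that the pipe at column `j` of the cut below row `i`
comes from. -/
noncomputable def source (i j : ℕ) : ℕ := if (i, j) ∈ P.cross then j else P.nextBump i (j + 1)

lemma source_of_mem {i j : ℕ} (h : (i, j) ∈ P.cross) : P.source i j = j := if_pos h

lemma source_of_notMem {i j : ℕ} (h : (i, j) ∉ P.cross) :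
    P.source i j = P.nextBump i (j + 1) :=
  if_neg h

lemma north_succ_eq_north_source (i j : ℕ) : P.north (i + 1, j) = P.north (i, P.source i j) := by
  rw [P.north_succ]
  by_cases h : (i, j) ∈ P.cross
  · rw [P.source_of_mem h, P.south_cross _ h]
  · rw [P.source_of_notMem h, P.south_bump _ h, P.east_eq_north_nextBump]

lemma le_source (i j : ℕ) : j ≤ P.source i j := by
  by_cases h : (i, j) ∈ P.cross
  · rw [P.source_of_mem h]
  · rw [P.source_of_notMem h]; exact (Nat.le_succ j).trans (P.le_nextBump i (j + 1))

lemma source_injective (i : ℕ) : Function.Injective (P.source i) := by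
  suffices ∀ {j₁ j₂}, j₁ < j₂ → P.source i j₁ ≠ P.source i j₂ from
    fun j₁ j₂ h => by_contra fun hne => (Ne.lt_or_gt hne).elim (this · h) (this · h.symm)
  intro j₁ j₂ hlt heq
  by_cases h₁ : (i, j₁) ∈ P.cross
  · rw [P.source_of_mem h₁] at heq
    have := P.le_source i j₂
    omega
  · rw [P.source_of_notMem h₁] at heq
    by_cases h₂ : (i, j₂) ∈ P.cross
    · rw [P.source_of_mem h₂] at heq
      exact P.nextBump_notMem i (j₁ + 1) (heq ▸ h₂)
    · have : P.nextBump i (j₁ + 1) ≤ j₂ := P.nextBump_le (by omega) h₂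
      rw [P.source_of_notMem h₂] at heq
      have := P.le_nextBump i (j₂ + 1)
      omega

lemma north_injective (i : ℕ) : Function.Injective fun j => P.north (i, j) := by
  induction i with
  | zero => intro a b h; simpa [P.north_top] using h
  | succ i ih =>
    intro a b h
    simp only [P.north_succ_eq_north_source] at h
    exact P.source_injective i (ih h)

lemma source_ne_nextBump_zero (i j : ℕ) : P.source i j ≠ P.nextBump i 0 := by
  by_cases h : (i, j) ∈ P.cross
  · rw [P.source_of_mem h]
    rintro rfl
    exact P.nextBump_notMem i 0 h
  · rw [P.source_of_notMem h]
    have := P.nextBump_le (Nat.zero_le j) h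
    have := P.le_nextBump i (j + 1)
    omega

/-- The preimage of a bump `k` is the last bump to its west. -/
lemma exists_source_eq {i k : ℕ} (hk : k ≠ P.nextBump i 0) : ∃ j, P.source i j = k := by
  by_cases hc : (i, k) ∈ P.cross
  · exact ⟨k, P.source_of_mem hc⟩
  have hk0 : P.nextBump i 0 < k := lt_of_le_of_ne (P.nextBump_le (Nat.zero_le k) hc) (Ne.symm hk)
  set j := Nat.findGreatest (fun t => (i, t) ∉ P.cross) (k - 1)
  have hj : (i, j) ∉ P.cross :=
    Nat.findGreatest_spec (P := fun t => (i, t) ∉ P.cross) (by omega) (P.nextBump_notMem i 0)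
  have hjk : j ≤ k - 1 := Nat.findGreatest_le _
  refine ⟨j, (P.source_of_notMem hj).trans (le_antisymm (P.nextBump_le (by omega) hc) ?_)⟩
  by_contra hlt
  have hle : P.nextBump i (j + 1) ≤ j :=
    Nat.le_findGreatest (P := fun t => (i, t) ∉ P.cross) (by omega) (P.nextBump_notMem i (j + 1))
  have := P.le_nextBump i (j + 1)
  omega

lemma source_eq_skipAt {i m : ℕ} (hrow : ∀ k, (i, k) ∈ P.cross ↔ k < m) :
    P.source i = skipAt m := by
  funext j
  by_cases h : j < m
  · rw [P.source_of_mem ((hrow j).2 h), skipAt, if_pos h]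
  · rw [P.source_of_notMem (mt (hrow j).1 h), P.nextBump_eq_self (mt (hrow _).1 (by omega)),
      skipAt, if_neg h]

lemma nextBump_congr {P Q : PipeDream} (h : P.cross = Q.cross) : P.nextBump = Q.nextBump := by
  funext i j
  exact le_antisymm (P.nextBump_le (Q.le_nextBump i j) (h ▸ Q.nextBump_notMem i j))
    (Q.nextBump_le (P.le_nextBump i j) (h ▸ P.nextBump_notMem i j))

theorem ext_of_cross_eq {P Q : PipeDream} (h : P.cross = Q.cross) : P = Q := by
  have hsource : P.source = Q.source := by
    funext i j
    simp only [source, h, nextBump_congr h]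
  have hN : P.north = Q.north := by
    funext p
    obtain ⟨i, j⟩ := p
    induction i generalizing j with
    | zero => rw [P.north_top, Q.north_top]
    | succ i ih => rw [P.north_succ_eq_north_source, Q.north_succ_eq_north_source, hsource, ih]
  have hW : P.west = Q.west := funext fun p => by
    rw [P.west_eq_north_nextBump, Q.west_eq_north_nextBump, hN, nextBump_congr h]
  have hE : P.east = Q.east := funext fun p => by rw [P.east_eq, Q.east_eq, hW]
  have hS : P.south = Q.south := funext fun p => by rw [← P.north_succ, ← Q.north_succ, hN]
  cases P
  cases Q
  congr

def CrossesFrom (i a b : ℕ) : Prop := ∃ p, i ≤ p.1 ∧ P.CrossAt a b p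

lemma crossesFrom_iff (i a b : ℕ) :
    P.CrossesFrom i a b ↔ (∃ t, P.CrossAt a b (i, t)) ∨ P.CrossesFrom (i + 1) a b := by
  constructor
  · rintro ⟨⟨r, t⟩, hr, hcross⟩
    rcases hr.eq_or_lt with rfl | hlt
    · exact Or.inl ⟨t, hcross⟩
    · exact Or.inr ⟨(r, t), hlt, hcross⟩
  · rintro (⟨t, hcross⟩ | ⟨p, hp, hcross⟩)
    · exact ⟨(i, t), le_rfl, hcross⟩
    · exact ⟨p, by omega, hcross⟩

lemma exists_cross_north_east_iff {i qa qb pa pb a b : ℕ}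
    (hsa : P.source i qa = pa) (hsb : P.source i qb = pb)
    (ha : P.north (i, pa) = a) (hb : P.north (i, pb) = b) :
    (∃ t, (i, t) ∈ P.cross ∧ P.north (i, t) = b ∧ P.east (i, t) = a) ↔
      qa < qb ∧ pb < pa := by
  constructor
  · rintro ⟨t, ht, htb, hta⟩
    rw [east_eq_north_nextBump] at hta
    have hpb : pb = t := P.north_injective i (hb.trans htb.symm)
    have hpa : pa = P.nextBump i (t + 1) := P.north_injective i (ha.trans hta.symm)
    have hqb : qb = t := P.source_injective i (by rw [hsb, hpb, P.source_of_mem ht])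
    have hqa : (i, qa) ∉ P.cross := fun hc => by
      rw [P.source_of_mem hc] at hsa
      exact P.nextBump_notMem i (t + 1) (hpa ▸ hsa ▸ hc)
    rw [P.source_of_notMem hqa] at hsa
    have hqat : qa ≠ t := fun h => hqa (h ▸ ht)
    have := P.le_nextBump i (t + 1)
    have := P.le_nextBump i (qa + 1)
    have : t < qa → P.nextBump i (t + 1) ≤ qa := fun h => P.nextBump_le h hqa
    omega
  · rintro ⟨hq, hp⟩
    have hqbpb := hsb ▸ P.le_source i qb
    have hqa : (i, qa) ∉ P.cross := fun hc => by
      rw [P.source_of_mem hc] at hsa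
      omega
    rw [P.source_of_notMem hqa] at hsa
    have hqb : (i, qb) ∈ P.cross := P.mem_cross_of_lt_nextBump (j := qa + 1) hq (by omega)
    have hpb : pb = qb := hsb ▸ P.source_of_mem hqb
    refine ⟨qb, hqb, hpb ▸ hb, ?_⟩
    rw [east_eq_north_nextBump,
      P.nextBump_eq_of_le_of_le (j := qa + 1) (k := qb + 1) (by omega) (by omega), hsa, ha]

lemma exists_crossAt_iff {i qa qb pa pb a b : ℕ}
    (hsa : P.source i qa = pa) (hsb : P.source i qb = pb)
    (ha : P.north (i, pa) = a) (hb : P.north (i, pb) = b) :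
    (∃ t, P.CrossAt a b (i, t)) ↔ (qa < qb ∧ pb < pa) ∨ (qb < qa ∧ pa < pb) := by
  rw [← P.exists_cross_north_east_iff hsa hsb ha hb,
    ← P.exists_cross_north_east_iff hsb hsa hb ha]
  simp only [CrossAt, Set.pair_eq_pair_iff, and_or_left, exists_or, or_comm]

end Rows

section Exit

variable {P : PipeDream} {w : Perm ℕ}

lemma north_nextBump_zero (hfor : P.IsFor w) (i : ℕ) : P.north (i, P.nextBump i 0) = w i := by
  rw [← P.west_eq_north_nextBump]
  exact hfor i

lemma north_ne_of_lt (hfor : P.IsFor w) {i i' : ℕ} (h : i < i') (j : ℕ) :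
    P.north (i', j) ≠ w i := by
  induction i' generalizing j with
  | zero => omega
  | succ i' ih =>
    rw [P.north_succ_eq_north_source]
    rcases (Nat.lt_succ_iff.1 h).lt_or_eq with hlt | rfl
    · exact ih hlt _
    · rw [← north_nextBump_zero hfor]
      exact fun he => P.source_ne_nextBump_zero i j (P.north_injective i he)

lemma le_inv_apply_north (hfor : P.IsFor w) (i j : ℕ) : i ≤ w⁻¹ (P.north (i, j)) :=
  not_lt.1 fun h => north_ne_of_lt hfor h j (w.apply_symm_apply _).symm

/-- The pipe `w i` turns west at the first bump of row `i` and then leaves the pipe dream. -/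
lemma crossesFrom_iff_of_exit (hfor : P.IsFor w) {i a pa : ℕ} (ha : P.north (i, pa) = a) :
    P.CrossesFrom i a (w i) ↔ pa < P.nextBump i 0 := by
  have hexit : ∀ r s, i ≤ r → P.north (r, s) = w i → r = i ∧ s = P.nextBump i 0 := by
    intro r s hr hs
    obtain rfl : r = i := by_contra fun hne => north_ne_of_lt hfor (by omega) s hs
    exact ⟨rfl, P.north_injective r (hs.trans (north_nextBump_zero hfor r).symm)⟩
  constructor
  · rintro ⟨⟨r, t⟩, hr, ht, hpair⟩
    rcases Set.pair_eq_pair_iff.1 hpair with ⟨hta, hte⟩ | ⟨htw, -⟩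
    · rw [east_eq_north_nextBump] at hte
      obtain ⟨rfl, hbump⟩ := hexit r _ hr hte
      have hpa : pa = t := P.north_injective r (ha.trans hta.symm)
      have := P.le_nextBump r (t + 1)
      omega
    · obtain ⟨rfl, rfl⟩ := hexit r t hr htw
      exact absurd ht (P.nextBump_notMem r 0)
  · intro hpa
    refine ⟨(i, pa), le_rfl, P.mem_cross_of_lt_nextBump (Nat.zero_le pa) hpa, ?_⟩
    rw [east_eq_north_nextBump, P.nextBump_eq_of_le_of_le (Nat.zero_le _) hpa,
      north_nextBump_zero hfor, ha]

/-- Row `i` swaps exactly the pairs whose columns reverse across it (`exists_crossAt_iff`), and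
reducedness forbids a pair to be swapped again further down. -/
theorem crossesFrom_iff_lt (hred : P.Reduced) (hfor : P.IsFor w) {i a b pa pb : ℕ}
    (hi : i ≤ w⁻¹ b) (hba : w⁻¹ b < w⁻¹ a)
    (ha : P.north (i, pa) = a) (hb : P.north (i, pb) = b) :
    P.CrossesFrom i a b ↔ pa < pb := by
  obtain ⟨d, hd⟩ := Nat.exists_eq_add_of_le hi
  clear hi
  induction d generalizing i pa pb with
  | zero =>
    obtain rfl : w i = b := (Perm.inv_eq_iff_eq.1 hd).symm
    rw [crossesFrom_iff_of_exit hfor ha,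
      P.north_injective i (hb.trans (north_nextBump_zero hfor i).symm)]
  | succ d ih =>
    have hnb : b ≠ w i := by rintro rfl; simp at hd
    have hna : a ≠ w i := by
      rintro rfl
      have : w⁻¹ (w i) = i := Perm.inv_eq_iff_eq.2 rfl
      omega
    obtain ⟨qa, hqa⟩ := P.exists_source_eq (i := i) (k := pa) fun h =>
      hna (by rw [← ha, h, north_nextBump_zero hfor])
    obtain ⟨qb, hqb⟩ := P.exists_source_eq (i := i) (k := pb) fun h =>
      hnb (by rw [← hb, h, north_nextBump_zero hfor])
    have ha₁ : P.north (i + 1, qa) = a := by rw [north_succ_eq_north_source, hqa, ha]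
    have hb₁ : P.north (i + 1, qb) = b := by rw [north_succ_eq_north_source, hqb, hb]
    have hab : a ≠ b := by rintro rfl; omega
    have hpab : pa ≠ pb := by rintro rfl; exact hab (ha.symm.trans hb)
    have hqab : qa ≠ qb := by rintro rfl; exact hab (ha₁.symm.trans hb₁)
    have hbelow := ih ha₁ hb₁ (by omega)
    have hrow := P.exists_crossAt_iff hqa hqb ha hb
    have honce : ¬ ((∃ t, P.CrossAt a b (i, t)) ∧ P.CrossesFrom (i + 1) a b) := by
      rintro ⟨⟨t, ht⟩, ⟨p, hp, hp'⟩⟩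
      obtain rfl := hred a b _ _ ht hp'
      omega
    rw [hrow, hbelow] at honce
    rw [crossesFrom_iff, hrow, hbelow]
    omega

/-- By 132-avoidance the smaller pipe exits first, so `crossesFrom_iff_lt` applies. -/
lemma not_crossesFrom_of_avoids132 (hdom : Avoids132 w) (hred : P.Reduced)
    (hfor : P.IsFor w) {i j k : ℕ} (hjk : j < k) (hwb : w i < P.north (i, j))
    (hba : P.north (i, j) < P.north (i, k)) :
    ¬ P.CrossesFrom i (P.north (i, k)) (P.north (i, j)) := by
  set a := P.north (i, k)
  set b := P.north (i, j)
  have hia : i < w⁻¹ a := lt_of_le_of_ne (le_inv_apply_north hfor i k) fun h =>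
    (hwb.trans hba).ne' (Perm.inv_eq_iff_eq.1 h.symm)
  have hib : i < w⁻¹ b := lt_of_le_of_ne (le_inv_apply_north hfor i j) fun h =>
    hwb.ne' (Perm.inv_eq_iff_eq.1 h.symm)
  rcases lt_trichotomy (w⁻¹ a) (w⁻¹ b) with h | h | h
  · exact absurd ⟨i, w⁻¹ a, w⁻¹ b, hia, h, by simpa using hwb, by simpa using hba⟩ hdom
  · exact absurd (w⁻¹.injective h) hba.ne'
  · exact fun hc => absurd ((crossesFrom_iff_lt hred hfor hib.le h rfl rfl).1 hc) hjk.not_gt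

end Exit

end PipeDream

/-- `ydLabel l i j` is the pipe at column `j` of the cut above row `i` when the crossing tiles
form the Young diagram of `l`: row `i` drops the pipe at column `l i`. -/
def ydLabel (l : ℕ → ℕ) : ℕ → ℕ → ℕ
  | 0 => id
  | i + 1 => ydLabel l i ∘ skipAt (l i)

lemma ydLabel_strictMono (l : ℕ → ℕ) (i : ℕ) : StrictMono (ydLabel l i) := by
  induction i with
  | zero => exact strictMono_id
  | succ i ih => exact ih.comp (skipAt_strictMono _)

lemma ydLabel_of_lt {l : ℕ → ℕ} (hl : Antitone l) {i j : ℕ} (h : j < l i) :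
    ydLabel l i j = j := by
  induction i with
  | zero => rfl
  | succ i ih =>
    have hj : j < l i := h.trans_le (hl i.le_succ)
    change ydLabel l i (skipAt (l i) j) = j
    rw [skipAt, if_pos hj, ih hj]

section Rothe

variable {π : Perm ℕ} {l : ℕ → ℕ}

lemma lt_iff_of_rothe_eq_yd (hD : Rothe π = yd l) {i j : ℕ} :
    j < l i ↔ i < π⁻¹ j ∧ j < π i :=
  (Set.ext_iff.1 hD (i, j)).symm

lemma le_apply_of_rothe_eq_yd (hD : Rothe π = yd l) (i : ℕ) : l i ≤ π i :=
  not_lt.1 fun h => lt_irrefl _ ((lt_iff_of_rothe_eq_yd hD).1 h).2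

lemma ydLabel_self_of_range (hl : Antitone l) (hD : Rothe π = yd l) {i : ℕ}
    (hrange : Set.range (ydLabel l i) = {k | i ≤ π⁻¹ k}) : ydLabel l i (l i) = π i := by
  have hmono := ydLabel_strictMono l i
  obtain ⟨j, hj⟩ : π i ∈ Set.range (ydLabel l i) := by
    rw [hrange]
    exact (Perm.inv_eq_iff_eq.2 rfl : π⁻¹ (π i) = i).ge
  rcases lt_trichotomy j (l i) with h | rfl | h
  · rw [ydLabel_of_lt hl h] at hj
    have := le_apply_of_rothe_eq_yd hD i
    omega
  · exact hj
  · have hlt : ydLabel l i (l i) < π i := hj ▸ hmono h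
    have hle : i ≤ π⁻¹ (ydLabel l i (l i)) := hrange.subset ⟨_, rfl⟩
    have hne : π⁻¹ (ydLabel l i (l i)) ≠ i := fun he => hlt.ne (Perm.inv_eq_iff_eq.1 he)
    have := (lt_iff_of_rothe_eq_yd hD).2 ⟨lt_of_le_of_ne hle hne.symm, hlt⟩
    have : l i ≤ ydLabel l i (l i) := hmono.le_apply
    omega

lemma range_ydLabel (hl : Antitone l) (hD : Rothe π = yd l) (i : ℕ) :
    Set.range (ydLabel l i) = {k | i ≤ π⁻¹ k} := by
  induction i with
  | zero => simp [ydLabel]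
  | succ i ih =>
    change Set.range (ydLabel l i ∘ skipAt (l i)) = _
    rw [range_comp_skipAt (ydLabel_strictMono l i).injective, ih, ydLabel_self_of_range hl hD ih]
    ext k
    have : k = π i ↔ π⁻¹ k = i := Perm.inv_eq_iff_eq.symm
    simp only [Set.mem_sdiff, Set.mem_ofPred_eq, Set.mem_singleton_iff, this]
    omega

lemma ydLabel_self (hl : Antitone l) (hD : Rothe π = yd l) (i : ℕ) : ydLabel l i (l i) = π i :=
  ydLabel_self_of_range hl hD (range_ydLabel hl hD i)

end Rothe

lemma finite_yd {l : ℕ → ℕ} (hsupp : (Function.support l).Finite) : (yd l).Finite := by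
  refine (hsupp.biUnion fun i _ => (Set.finite_Iio (l i)).image (Prod.mk i)).subset ?_
  rintro ⟨i, j⟩ (h : j < l i)
  simp only [Set.mem_iUnion]
  exact ⟨i, (Nat.zero_le j).trans_lt h |>.ne', j, h, rfl⟩

lemma prod_toFinset_yd {M : Type*} [CommMonoid M] {l : ℕ → ℕ}
    (hsupp : (Function.support l).Finite) (f : ℕ → M) :
    ∏ p ∈ (finite_yd hsupp).toFinset, f p.1 = ∏ᶠ i, f i ^ l i := by
  rw [Finset.prod_finset_product _ hsupp.toFinset fun i => Finset.range (l i)]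
  · simp only [Finset.prod_const, Finset.card_range]
    refine (finprod_eq_prod_of_mulSupport_subset _ fun i hi => ?_).symm
    rw [Set.Finite.coe_toFinset]
    exact fun hl => hi (by simp only [hl, pow_zero])
  · rintro ⟨i, j⟩
    simp only [Set.Finite.mem_toFinset, Finset.mem_range, Function.mem_support]
    exact ⟨fun h => ⟨(Nat.zero_le j).trans_lt h |>.ne', h⟩, And.right⟩

namespace PipeDream

section Dominant

variable {P : PipeDream} {π : Perm ℕ} {l : ℕ → ℕ}

lemma mem_cross_iff_of_north_eq (hdom : Avoids132 π) (hl : Antitone l) (hD : Rothe π = yd l)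
    (hred : P.Reduced) (hfor : P.IsFor π) {i : ℕ} (hN : ∀ j, P.north (i, j) = ydLabel l i j)
    (j : ℕ) : (i, j) ∈ P.cross ↔ j < l i := by
  have hmono := ydLabel_strictMono l i
  have hbump : P.nextBump i 0 = l i :=
    hmono.injective (by rw [← hN, north_nextBump_zero hfor, ydLabel_self hl hD])
  refine ⟨fun hc => ?_, fun h => P.mem_cross_of_lt_nextBump (Nat.zero_le j) (hbump ▸ h)⟩
  by_contra hj
  have hlj : l i < j := lt_of_le_of_ne (not_lt.1 hj) fun h =>
    P.nextBump_notMem i 0 (hbump ▸ h ▸ hc)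
  have hk := P.le_nextBump i (j + 1)
  refine not_crossesFrom_of_avoids132 hdom hred hfor (j := j) (k := P.nextBump i (j + 1))
    (by omega) (by rw [hN, ← ydLabel_self hl hD]; exact hmono hlj)
    (by rw [hN, hN]; exact hmono (by omega))
    ⟨(i, j), le_rfl, hc, ?_⟩
  rw [east_eq_north_nextBump]
  exact Set.pair_comm _ _

lemma north_eq_ydLabel (hdom : Avoids132 π) (hl : Antitone l) (hD : Rothe π = yd l)
    (hred : P.Reduced) (hfor : P.IsFor π) (i j : ℕ) : P.north (i, j) = ydLabel l i j := by
  induction i generalizing j with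
  | zero => exact P.north_top j
  | succ i ih =>
    rw [north_succ_eq_north_source,
      P.source_eq_skipAt (mem_cross_iff_of_north_eq hdom hl hD hred hfor ih), ih]
    rfl

theorem coe_cross_eq_yd (hdom : Avoids132 π) (hl : Antitone l) (hD : Rothe π = yd l)
    (hP : P ∈ PD π) : (P.cross : Set (ℕ × ℕ)) = yd l := by
  ext ⟨i, j⟩
  exact mem_cross_iff_of_north_eq hdom hl hD hP.1 hP.2
    (north_eq_ydLabel hdom hl hD hP.1 hP.2 i) j

end Dominant

noncomputable def ofYd (l : ℕ → ℕ) (hfin : (yd l).Finite) : PipeDream where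
  cross := hfin.toFinset
  north p := ydLabel l p.1 p.2
  east p := ydLabel l p.1 (max (p.2 + 1) (l p.1))
  south p := ydLabel l (p.1 + 1) p.2
  west p := ydLabel l p.1 (max p.2 (l p.1))
  north_top _ := rfl
  north_succ _ _ := rfl
  east_eq _ _ := rfl
  south_cross p hp := by
    replace hp : p.2 < l p.1 := hfin.mem_toFinset.1 hp
    change ydLabel l p.1 (skipAt (l p.1) p.2) = _
    rw [skipAt, if_pos hp]
  west_cross p hp := by
    replace hp : p.2 < l p.1 := hfin.mem_toFinset.1 hp
    change ydLabel l p.1 _ = ydLabel l p.1 _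
    congr 1
    omega
  south_bump p hp := by
    replace hp : ¬ p.2 < l p.1 := mt hfin.mem_toFinset.2 hp
    change ydLabel l p.1 (skipAt (l p.1) p.2) = _
    rw [skipAt, if_neg hp, max_eq_left (by omega)]
  west_bump p hp := by
    replace hp : ¬ p.2 < l p.1 := mt hfin.mem_toFinset.2 hp
    change ydLabel l p.1 _ = _
    rw [max_eq_left (by omega)]

section OfYd

variable {π : Perm ℕ} {l : ℕ → ℕ} (hfin : (yd l).Finite)

lemma coe_ofYd_cross : ((ofYd l hfin).cross : Set (ℕ × ℕ)) = yd l := hfin.coe_toFinset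

lemma ofYd_isFor (hl : Antitone l) (hD : Rothe π = yd l) : (ofYd l hfin).IsFor π := fun i => by
  change ydLabel l i (max 0 (l i)) = π i
  rw [Nat.zero_max, ydLabel_self hl hD]

lemma ofYd_reduced (hl : Antitone l) (hD : Rothe π = yd l) : (ofYd l hfin).Reduced := by
  have hpair : ∀ i j, (i, j) ∈ (ofYd l hfin).cross →
      ({(ofYd l hfin).north (i, j), (ofYd l hfin).east (i, j)} : Set ℕ) = {j, π i} := by
    intro i j hp
    replace hp : j < l i := hfin.mem_toFinset.1 hp
    change ({ydLabel l i j, ydLabel l i (max (j + 1) (l i))} : Set ℕ) = _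
    rw [ydLabel_of_lt hl hp, max_eq_right hp, ydLabel_self hl hD]
  rintro a b ⟨i, j⟩ ⟨i', j'⟩ ⟨hp, hab⟩ ⟨hp', hab'⟩
  have hj : j < l i := hfin.mem_toFinset.1 hp
  have hj' : j' < l i' := hfin.mem_toFinset.1 hp'
  have hpairs : ({j, π i} : Set ℕ) = {j', π i'} := ((hpair i j hp).symm.trans hab).trans
    (hpair i' j' hp' ▸ hab').symm
  rcases Set.pair_eq_pair_iff.1 hpairs with ⟨rfl, h⟩ | ⟨h₁, h₂⟩
  · rw [π.injective h]
  · have := le_apply_of_rothe_eq_yd hD i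
    have := le_apply_of_rothe_eq_yd hD i'
    omega

end OfYd

end PipeDream

theorem stmt8_general (π : Equiv.Perm ℕ) (l : ℕ → ℕ)
    (hdom : Avoids132 π) (hl : Antitone l) (hsupp : (Function.support l).Finite)
    (hD : Rothe π = yd l) :
    (∃! P : PipeDream, P ∈ PD π)
      ∧ (∀ P ∈ PD π, (P.cross : Set (ℕ × ℕ)) = Rothe π)
      ∧ Schub π = ∏ᶠ i, (X i : MvPolynomial ℕ ℤ) ^ l i := by
  have hfin := finite_yd hsupp
  have hcross : ∀ P ∈ PD π, (P.cross : Set (ℕ × ℕ)) = yd l := fun P hP =>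
    PipeDream.coe_cross_eq_yd hdom hl hD hP
  have hmem : PipeDream.ofYd l hfin ∈ PD π :=
    ⟨PipeDream.ofYd_reduced hfin hl hD, PipeDream.ofYd_isFor hfin hl hD⟩
  have hPD : PD π = {PipeDream.ofYd l hfin} := by
    refine Set.eq_singleton_iff_unique_mem.2 ⟨hmem, fun P hP => PipeDream.ext_of_cross_eq ?_⟩
    rw [← Finset.coe_inj, hcross P hP, PipeDream.coe_ofYd_cross]
  refine ⟨?_, hD ▸ hcross, ?_⟩
  · rw [hPD]
    exact ⟨_, rfl, fun _ => id⟩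
  · rw [Schub, hPD, finsum_mem_singleton]
    exact prod_toFinset_yd hsupp _

/-- a dominant permutation π with diagram the Young diagram of λ
has a unique reduced pipe dream, whose crossing set is D(π), and its Schubert
polynomial is the single monomial x^λ. -/
theorem stmt8 (π : Equiv.Perm ℕ) (l : ℕ → ℕ) (hπ : FinSupp π)
    (hdom : Avoids132 π) (hl : Antitone l) (hsupp : (Function.support l).Finite)
    (hD : Rothe π = yd l) :
    (∃! P : PipeDream, P ∈ PD π)
      ∧ (∀ P ∈ PD π, (P.cross : Set (ℕ × ℕ)) = Rothe π)
      ∧ Schub π = ∏ᶠ i, (X i : MvPolynomial ℕ ℤ) ^ l i :=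
  stmt8_general π l hdom hl hsupp hD
end
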